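/- (p-SBL majorization.) For all γ, γ̂ ∈ ℝ^M with strictly positive entries, f(γ) ≤ f(γ̂) + Σ_{i=1}^M [ γ[i]·T₂(γ̂)[i] + γ̂[i]²·T₁(γ̂)[i]/γ[i] ] − Σ_{i=1}^M γ̂[i]·( T₁(γ̂)[i] + T₂(γ̂)[i] ), with equality at γ = γ̂; i.e., the p-SBL surrogate g(γ; γ̂) = Σ_{i=1}^M [ γ[i]·T₂(γ̂)[i] + γ̂[i]²·T₁(γ̂)[i]/γ[i] ], after adding the constant f(γ̂) − g(γ̂; γ̂), majorizes f at γ̂. -/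

import Mathlib

open Matrix Finset Real

noncomputable def Sig {N M : ℕ} (Φ : Matrix (Fin N) (Fin M) ℝ) (σ2 : ℝ)
    (γ : Fin M → ℝ) : Matrix (Fin N) (Fin N) ℝ :=
  Φ * Matrix.diagonal γ * Φᵀ + σ2 • (1 : Matrix (Fin N) (Fin N) ℝ)

noncomputable def T1 {N M L : ℕ} (Φ : Matrix (Fin N) (Fin M) ℝ) (σ2 : ℝ)
    (y : Fin L → Fin N → ℝ) (γ : Fin M → ℝ) (i : Fin M) : ℝ :=
  (1 / (L : ℝ)) * ∑ l, ((fun n => Φ n i) ⬝ᵥ (Sig Φ σ2 γ)⁻¹ *ᵥ y l) ^ 2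

noncomputable def T2 {N M : ℕ} (Φ : Matrix (Fin N) (Fin M) ℝ) (σ2 : ℝ)
    (γ : Fin M → ℝ) (i : Fin M) : ℝ :=
  (fun n => Φ n i) ⬝ᵥ (Sig Φ σ2 γ)⁻¹ *ᵥ (fun n => Φ n i)

noncomputable def fSBL {N M L : ℕ} (Φ : Matrix (Fin N) (Fin M) ℝ) (σ2 : ℝ)
    (y : Fin L → Fin N → ℝ) (γ : Fin M → ℝ) : ℝ :=
  Real.log (Sig Φ σ2 γ).det + (1 / (L : ℝ)) * ∑ l, y l ⬝ᵥ (Sig Φ σ2 γ)⁻¹ *ᵥ y l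

/-! ### Auxiliary lemmas -/

/-- `log det X ≤ trace X - card` for positive definite real matrices. -/
lemma logdet_le {n : Type*} [Fintype n] [DecidableEq n] {X : Matrix n n ℝ}
    (hX : X.PosDef) : Real.log X.det ≤ X.trace - Fintype.card n := by
  have hev := hX.eigenvalues_pos
  have hdet : X.det = ∏ i, hX.isHermitian.eigenvalues i := by
    simpa using hX.isHermitian.det_eq_prod_eigenvalues
  have htr : X.trace = ∑ i, hX.isHermitian.eigenvalues i := by
    simpa using hX.isHermitian.trace_eq_sum_eigenvalues
  rw [hdet, htr, Real.log_prod (fun i _ => (hev i).ne')]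
  calc ∑ i, Real.log (hX.isHermitian.eigenvalues i)
      ≤ ∑ i, (hX.isHermitian.eigenvalues i - 1) :=
        Finset.sum_le_sum fun i _ => Real.log_le_sub_one_of_pos (hev i)
    _ = ∑ i, hX.isHermitian.eigenvalues i - Fintype.card n := by
        rw [Finset.sum_sub_distrib]; simp [Finset.card_univ]

section Aux

variable {N M : ℕ} (Φ : Matrix (Fin N) (Fin M) ℝ) (σ2 : ℝ)

lemma sig_posDef (hσ : 0 < σ2) {γ : Fin M → ℝ} (hγ : ∀ i, 0 ≤ γ i) :
    (Sig Φ σ2 γ).PosDef := by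
  have h1 : (Φ * Matrix.diagonal γ * Φᵀ).PosSemidef := by
    have hd : (Matrix.diagonal γ).PosSemidef := by
      rw [Matrix.posSemidef_diagonal_iff]; exact hγ
    simpa using hd.mul_mul_conjTranspose_same Φ
  have h2 : (σ2 • (1 : Matrix (Fin N) (Fin N) ℝ)).PosDef := by
    rw [Matrix.smul_one_eq_diagonal]
    exact Matrix.PosDef.diagonal fun _ => hσ
  exact Matrix.PosDef.posSemidef_add h1 h2

lemma trace_phi (d : Fin M → ℝ) (A : Matrix (Fin N) (Fin N) ℝ) :
    (Φ * Matrix.diagonal d * Φᵀ * A).trace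
      = ∑ i, d i * ((fun n => Φ n i) ⬝ᵥ A *ᵥ (fun n => Φ n i)) := by
  rw [Matrix.mul_assoc, Matrix.mul_assoc, Matrix.trace_mul_comm, ← Matrix.mul_assoc]
  rw [Matrix.mul_assoc]
  have : ∀ B : Matrix (Fin M) (Fin M) ℝ,
      (Matrix.diagonal d * B).trace = ∑ i, d i * B i i := by
    intro B
    simp [Matrix.trace, Matrix.diag, Matrix.diagonal_mul]
  rw [Matrix.mul_assoc (Matrix.diagonal d), this]
  refine Finset.sum_congr rfl fun i _ => ?_
  congr 1

lemma posdef_conj {S R : Matrix (Fin N) (Fin N) ℝ} (hS : S.PosDef)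
    (hR : R.IsHermitian) (hRu : IsUnit R.det) : (R⁻¹ * S * R⁻¹).PosDef := by
  have hRinv : R⁻¹.IsHermitian := hR.inv
  refine Matrix.PosDef.of_dotProduct_mulVec_pos ?_ ?_
  · have : (R⁻¹ * S * R⁻¹)ᴴ = R⁻¹ᴴ * Sᴴ * R⁻¹ᴴ := by
      rw [conjTranspose_mul, conjTranspose_mul, Matrix.mul_assoc]
    rw [Matrix.IsHermitian, this, hRinv.eq, hS.isHermitian.eq]
  · intro x hx
    have hx' : R⁻¹ *ᵥ x ≠ 0 := by
      intro h
      apply hx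
      have : R *ᵥ (R⁻¹ *ᵥ x) = x := by
        rw [Matrix.mulVec_mulVec, Matrix.mul_nonsing_inv _ hRu, Matrix.one_mulVec]
      rw [h, Matrix.mulVec_zero] at this
      exact this.symm
    have key : star x ⬝ᵥ (R⁻¹ * S * R⁻¹) *ᵥ x
        = star (R⁻¹ *ᵥ x) ⬝ᵥ S *ᵥ (R⁻¹ *ᵥ x) := by
      simp only [star_trivial]
      rw [← Matrix.mulVec_mulVec, ← Matrix.mulVec_mulVec]
      rw [Matrix.dotProduct_mulVec x, ← Matrix.mulVec_transpose,
        show R⁻¹ᵀ = R⁻¹ from hRinv]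
    rw [key]
    exact hS.dotProduct_mulVec_pos hx'

open scoped MatrixOrder in
lemma logdet_ineq (hσ : 0 < σ2) {γ γhat : Fin M → ℝ}
    (hγ : ∀ i, 0 ≤ γ i) (hγh : ∀ i, 0 ≤ γhat i) :
    Real.log (Sig Φ σ2 γ).det ≤
      Real.log (Sig Φ σ2 γhat).det + ∑ i, (γ i - γhat i) * T2 Φ σ2 γhat i := by
  set S := Sig Φ σ2 γ with hSdef
  set Sh := Sig Φ σ2 γhat with hShdef
  have hS : S.PosDef := sig_posDef Φ σ2 hσ hγ
  have hSh : Sh.PosDef := sig_posDef Φ σ2 hσ hγh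
  set R := CFC.sqrt Sh with hRdef
  have hRps : R.PosSemidef := Matrix.nonneg_iff_posSemidef.mp (CFC.sqrt_nonneg Sh)
  have hRR : R * R = Sh := CFC.sqrt_mul_sqrt_self Sh hSh.posSemidef.nonneg
  have hRdet : R.det * R.det = Sh.det := by rw [← Matrix.det_mul, hRR]
  have hRu : IsUnit R.det := by
    refine isUnit_iff_ne_zero.mpr fun h => ?_
    rw [h, mul_zero] at hRdet
    exact hSh.det_pos.ne' hRdet.symm
  have hShu : IsUnit Sh.det := hSh.det_pos.ne'.isUnit
  have hX : (R⁻¹ * S * R⁻¹).PosDef := posdef_conj hS hRps.isHermitian hRu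
  have hkey := logdet_le hX
  have hdet : (R⁻¹ * S * R⁻¹).det = S.det / Sh.det := by
    rw [Matrix.det_mul, Matrix.det_mul, Matrix.det_nonsing_inv, Ring.inverse_eq_inv', ← hRdet]
    have h0 : R.det ≠ 0 := hRu.ne_zero
    field_simp
  have hinv : R⁻¹ * R⁻¹ = Sh⁻¹ := by rw [← Matrix.mul_inv_rev, hRR]
  have htr : (R⁻¹ * S * R⁻¹).trace = (Sh⁻¹ * S).trace := by
    rw [Matrix.trace_mul_cycle]
    rw [show R⁻¹ * R⁻¹ * S = Sh⁻¹ * S by rw [hinv]]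
  have hdiff : S = Sh + Φ * Matrix.diagonal (γ - γhat) * Φᵀ := by
    have hd2 : Φ * Matrix.diagonal (γ - γhat) * Φᵀ
        = Φ * Matrix.diagonal γ * Φᵀ - Φ * Matrix.diagonal γhat * Φᵀ := by
      have hdd : Matrix.diagonal (γ - γhat)
          = Matrix.diagonal γ - Matrix.diagonal γhat := by
        ext i j
        by_cases h : i = j <;> simp [h, Matrix.diagonal]
      rw [hdd, Matrix.mul_sub, Matrix.sub_mul]
    rw [hSdef, hShdef]
    simp only [Sig]
    rw [hd2]
    abel
  have hsplit : (Sh⁻¹ * S).trace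
      = N + ∑ i, (γ i - γhat i) * T2 Φ σ2 γhat i := by
    rw [hdiff, Matrix.mul_add, Matrix.nonsing_inv_mul _ hShu, Matrix.trace_add,
      Matrix.trace_one, Matrix.trace_mul_comm, trace_phi]
    simp [T2, ← hShdef, Pi.sub_apply]
  rw [hdet, htr, hsplit] at hkey
  rw [Real.log_div hS.det_pos.ne' hSh.det_pos.ne'] at hkey
  simp only [Fintype.card_fin] at hkey
  linarith

lemma quad_identity (hσ : 0 < σ2) {γ : Fin M → ℝ} (hγ : ∀ i, 0 < γ i)
    (yv : Fin N → ℝ) (x : Fin M → ℝ) :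
    σ2⁻¹ * ((yv - Φ *ᵥ x) ⬝ᵥ (yv - Φ *ᵥ x)) + ∑ i, (x i)^2 * (γ i)⁻¹
      = yv ⬝ᵥ (Sig Φ σ2 γ)⁻¹ *ᵥ yv
        + (x - fun i => γ i * ((fun n => Φ n i) ⬝ᵥ (Sig Φ σ2 γ)⁻¹ *ᵥ yv)) ⬝ᵥ
          ((σ2⁻¹ • (Φᵀ * Φ) + Matrix.diagonal fun i => (γ i)⁻¹) *ᵥ
           (x - fun i => γ i * ((fun n => Φ n i) ⬝ᵥ (Sig Φ σ2 γ)⁻¹ *ᵥ yv))) := by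
  have hσ' : σ2 ≠ 0 := hσ.ne'
  set S := Sig Φ σ2 γ with hSdef
  have hS : S.PosDef := sig_posDef Φ σ2 hσ (fun i => (hγ i).le)
  have hSu : IsUnit S.det := hS.det_pos.ne'.isUnit
  set Si := S⁻¹ with hSidef
  set H : Matrix (Fin M) (Fin M) ℝ :=
    σ2⁻¹ • (Φᵀ * Φ) + Matrix.diagonal fun i => (γ i)⁻¹ with hHdef
  set xs : Fin M → ℝ :=
    fun i => γ i * ((fun n => Φ n i) ⬝ᵥ Si *ᵥ yv) with hxsdef
  have hxs : xs = Matrix.diagonal γ *ᵥ (Φᵀ *ᵥ (Si *ᵥ yv)) := by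
    ext i
    rw [Matrix.mulVec_diagonal]
    simp [hxsdef, Matrix.mulVec, dotProduct, Matrix.transpose_apply]
  have h1 : (Matrix.diagonal fun i => (γ i)⁻¹) * (Matrix.diagonal γ * Φᵀ) = Φᵀ := by
    rw [← Matrix.mul_assoc, Matrix.diagonal_mul_diagonal]
    have : (fun i => (γ i)⁻¹ * γ i) = fun _ => (1 : ℝ) :=
      funext fun i => inv_mul_cancel₀ (hγ i).ne'
    rw [this]
    rw [show Matrix.diagonal (fun _ : Fin M => (1:ℝ)) = 1 from Matrix.diagonal_one]
    rw [Matrix.one_mul]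
  have hHmat : H * (Matrix.diagonal γ * Φᵀ) = σ2⁻¹ • (Φᵀ * S) := by
    rw [hHdef, Matrix.add_mul, h1, hSdef]
    simp only [Sig]
    rw [Matrix.mul_add, smul_add, Matrix.mul_smul, smul_smul,
      inv_mul_cancel₀ hσ', one_smul, Matrix.mul_one]
    congr 1
    rw [Matrix.smul_mul, Matrix.mul_assoc, Matrix.mul_assoc]
  have hHxs : H *ᵥ xs = σ2⁻¹ • (Φᵀ *ᵥ yv) := by
    rw [hxs, Matrix.mulVec_mulVec, Matrix.mulVec_mulVec, Matrix.mulVec_mulVec]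
    rw [show H * Matrix.diagonal γ * Φᵀ * Si = H * (Matrix.diagonal γ * Φᵀ) * Si by
      rw [Matrix.mul_assoc H]]
    rw [hHmat, Matrix.smul_mul, Matrix.mul_assoc, Matrix.mul_nonsing_inv _ hSu,
      Matrix.mul_one, Matrix.smul_mulVec]
  have hHsym : Hᵀ = H := by
    rw [hHdef]
    rw [Matrix.transpose_add, Matrix.transpose_smul, Matrix.transpose_mul,
      Matrix.transpose_transpose, Matrix.diagonal_transpose]
  have hsym : ∀ a b : Fin M → ℝ, a ⬝ᵥ (H *ᵥ b) = b ⬝ᵥ (H *ᵥ a) := by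
    intro a b
    rw [Matrix.dotProduct_mulVec, ← Matrix.mulVec_transpose, hHsym, dotProduct_comm]
  have hdotT : ∀ (v : Fin N → ℝ) (w : Fin M → ℝ),
      w ⬝ᵥ (Φᵀ *ᵥ v) = (Φ *ᵥ w) ⬝ᵥ v := by
    intro v w
    rw [Matrix.dotProduct_mulVec, Matrix.vecMul_transpose]
  have hdiag : ∀ w : Fin M → ℝ,
      w ⬝ᵥ ((Matrix.diagonal fun i => (γ i)⁻¹) *ᵥ w) = ∑ i, (w i)^2 * (γ i)⁻¹ := by
    intro w
    simp only [dotProduct, Matrix.mulVec_diagonal]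
    exact Finset.sum_congr rfl fun i _ => by ring
  have hquadH : ∀ w : Fin M → ℝ, w ⬝ᵥ (H *ᵥ w)
      = σ2⁻¹ * ((Φ *ᵥ w) ⬝ᵥ (Φ *ᵥ w)) + ∑ i, (w i)^2 * (γ i)⁻¹ := by
    intro w
    rw [hHdef, Matrix.add_mulVec, dotProduct_add, Matrix.smul_mulVec,
      dotProduct_smul, hdiag]
    congr 1
    rw [smul_eq_mul]
    congr 1
    rw [← Matrix.mulVec_mulVec, hdotT]
  have hPhixs : Φ *ᵥ xs = yv - σ2 • (Si *ᵥ yv) := by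
    rw [hxs, Matrix.mulVec_mulVec, Matrix.mulVec_mulVec, Matrix.mulVec_mulVec]
    have hsub : Φ * Matrix.diagonal γ * Φᵀ = S - σ2 • 1 := by
      rw [hSdef]; simp only [Sig]; abel
    rw [show Φ * Matrix.diagonal γ * Φᵀ * Si = (S - σ2 • 1) * Si by rw [hsub]]
    rw [Matrix.sub_mul, Matrix.mul_nonsing_inv _ hSu, Matrix.smul_mul, Matrix.one_mul]
    rw [Matrix.sub_mulVec, Matrix.one_mulVec, Matrix.smul_mulVec]
  have hxHxs : x ⬝ᵥ (H *ᵥ xs) = σ2⁻¹ * ((Φ *ᵥ x) ⬝ᵥ yv) := by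
    rw [hHxs, dotProduct_smul, smul_eq_mul, hdotT]
  have hxsHxs : xs ⬝ᵥ (H *ᵥ xs)
      = σ2⁻¹ * (yv ⬝ᵥ yv) - yv ⬝ᵥ (Si *ᵥ yv) := by
    rw [hHxs, dotProduct_smul, smul_eq_mul, hdotT, hPhixs, sub_dotProduct,
      smul_dotProduct, smul_eq_mul]
    rw [dotProduct_comm (Si *ᵥ yv) yv]
    field_simp
  have hexp : (x - xs) ⬝ᵥ (H *ᵥ (x - xs))
      = x ⬝ᵥ (H *ᵥ x) - 2 * (x ⬝ᵥ (H *ᵥ xs)) + xs ⬝ᵥ (H *ᵥ xs) := by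
    rw [Matrix.mulVec_sub, sub_dotProduct, dotProduct_sub, dotProduct_sub,
      hsym xs x]
    ring
  have hres : (yv - Φ *ᵥ x) ⬝ᵥ (yv - Φ *ᵥ x)
      = yv ⬝ᵥ yv - 2 * ((Φ *ᵥ x) ⬝ᵥ yv) + (Φ *ᵥ x) ⬝ᵥ (Φ *ᵥ x) := by
    rw [sub_dotProduct, dotProduct_sub, dotProduct_sub, dotProduct_comm yv (Φ *ᵥ x)]
    ring
  rw [hexp, hquadH x, hxHxs, hxsHxs, hres]
  field_simp
  ring

lemma H_nonneg (hσ : 0 < σ2) {γ : Fin M → ℝ} (hγ : ∀ i, 0 < γ i) (d : Fin M → ℝ) :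
    0 ≤ d ⬝ᵥ ((σ2⁻¹ • (Φᵀ * Φ) + Matrix.diagonal fun i => (γ i)⁻¹) *ᵥ d) := by
  rw [Matrix.add_mulVec, dotProduct_add, Matrix.smul_mulVec, dotProduct_smul,
    smul_eq_mul]
  have h1 : d ⬝ᵥ ((Φᵀ * Φ) *ᵥ d) = (Φ *ᵥ d) ⬝ᵥ (Φ *ᵥ d) := by
    rw [← Matrix.mulVec_mulVec, Matrix.dotProduct_mulVec, Matrix.vecMul_transpose]
  have h2 : d ⬝ᵥ ((Matrix.diagonal fun i => (γ i)⁻¹) *ᵥ d)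
      = ∑ i, (d i)^2 * (γ i)⁻¹ := by
    simp only [dotProduct, Matrix.mulVec_diagonal]
    exact Finset.sum_congr rfl fun i _ => by ring
  rw [h1, h2]
  have h3 : 0 ≤ (Φ *ᵥ d) ⬝ᵥ (Φ *ᵥ d) :=
    Finset.sum_nonneg fun i _ => mul_self_nonneg _
  have h4 : 0 ≤ ∑ i, (d i)^2 * (γ i)⁻¹ :=
    Finset.sum_nonneg fun i _ => mul_nonneg (sq_nonneg _) (inv_nonneg.mpr (hγ i).le)
  positivity

lemma data_ineq (hσ : 0 < σ2) {γ γhat : Fin M → ℝ}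
    (hγ : ∀ i, 0 < γ i) (hγh : ∀ i, 0 < γhat i) (yv : Fin N → ℝ) :
    yv ⬝ᵥ (Sig Φ σ2 γ)⁻¹ *ᵥ yv ≤ yv ⬝ᵥ (Sig Φ σ2 γhat)⁻¹ *ᵥ yv
      + ∑ i, (γhat i)^2 * ((fun n => Φ n i) ⬝ᵥ (Sig Φ σ2 γhat)⁻¹ *ᵥ yv)^2
          * ((γ i)⁻¹ - (γhat i)⁻¹) := by
  set xh : Fin M → ℝ :=
    fun i => γhat i * ((fun n => Φ n i) ⬝ᵥ (Sig Φ σ2 γhat)⁻¹ *ᵥ yv) with hxh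
  have hid1 := quad_identity Φ σ2 hσ hγ yv xh
  have hid2 := quad_identity Φ σ2 hσ hγh yv xh
  rw [← hxh, sub_self, zero_dotProduct, add_zero] at hid2
  have hge := H_nonneg Φ σ2 hσ hγ
    (xh - fun i => γ i * ((fun n => Φ n i) ⬝ᵥ (Sig Φ σ2 γ)⁻¹ *ᵥ yv))
  have hsum : ∑ i, (γhat i)^2 * ((fun n => Φ n i) ⬝ᵥ (Sig Φ σ2 γhat)⁻¹ *ᵥ yv)^2
          * ((γ i)⁻¹ - (γhat i)⁻¹)
      = ∑ i, (xh i)^2 * (γ i)⁻¹ - ∑ i, (xh i)^2 * (γhat i)⁻¹ := by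
    rw [← Finset.sum_sub_distrib]
    refine Finset.sum_congr rfl fun i _ => ?_
    rw [hxh]
    ring
  rw [hsum]
  linarith

end Aux

/-- p-SBL majorization: for entrywise positive γ, γ̂,
f(γ) ≤ f(γ̂) + Σᵢ [γ[i]T₂(γ̂)[i] + γ̂[i]²T₁(γ̂)[i]/γ[i]] − Σᵢ γ̂[i](T₁(γ̂)[i]+T₂(γ̂)[i]),
with equality at γ = γ̂. -/
theorem stmt2 {N M L : ℕ} (hL : 1 ≤ L) (Φ : Matrix (Fin N) (Fin M) ℝ) (σ2 : ℝ)
    (hσ : 0 < σ2) (y : Fin L → Fin N → ℝ) :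
    (∀ γ γhat : Fin M → ℝ, (∀ i, 0 < γ i) → (∀ i, 0 < γhat i) →
      fSBL Φ σ2 y γ ≤
        fSBL Φ σ2 y γhat
          + ∑ i, (γ i * T2 Φ σ2 γhat i + (γhat i) ^ 2 * T1 Φ σ2 y γhat i / γ i)
          - ∑ i, γhat i * (T1 Φ σ2 y γhat i + T2 Φ σ2 γhat i)) ∧
    (∀ γhat : Fin M → ℝ, (∀ i, 0 < γhat i) →
      fSBL Φ σ2 y γhat =
        fSBL Φ σ2 y γhat
          + ∑ i, (γhat i * T2 Φ σ2 γhat i + (γhat i) ^ 2 * T1 Φ σ2 y γhat i / γhat i)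
          - ∑ i, γhat i * (T1 Φ σ2 y γhat i + T2 Φ σ2 γhat i)) := by
  constructor
  · intro γ γhat hγ hγh
    have hA := logdet_ineq Φ σ2 hσ (fun i => (hγ i).le) (fun i => (hγh i).le)
    have hLpos : (0:ℝ) ≤ 1 / (L:ℝ) := by positivity
    -- summed data inequality
    have hB : (1/(L:ℝ)) * ∑ l, y l ⬝ᵥ (Sig Φ σ2 γ)⁻¹ *ᵥ y l
        ≤ (1/(L:ℝ)) * ∑ l, y l ⬝ᵥ (Sig Φ σ2 γhat)⁻¹ *ᵥ y l
          + ∑ i, (γhat i)^2 * T1 Φ σ2 y γhat i * ((γ i)⁻¹ - (γhat i)⁻¹) := by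
      have hstep : ∑ l, y l ⬝ᵥ (Sig Φ σ2 γ)⁻¹ *ᵥ y l
          ≤ ∑ l, (y l ⬝ᵥ (Sig Φ σ2 γhat)⁻¹ *ᵥ y l
            + ∑ i, (γhat i)^2 * ((fun n => Φ n i) ⬝ᵥ (Sig Φ σ2 γhat)⁻¹ *ᵥ y l)^2
                * ((γ i)⁻¹ - (γhat i)⁻¹)) :=
        Finset.sum_le_sum fun l _ => data_ineq Φ σ2 hσ hγ hγh (y l)
      have hmul := mul_le_mul_of_nonneg_left hstep hLpos
      refine hmul.trans_eq ?_
      rw [Finset.sum_add_distrib, mul_add]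
      congr 1
      rw [Finset.sum_comm, Finset.mul_sum]
      refine Finset.sum_congr rfl fun i _ => ?_
      rw [T1]
      have : ∑ l, (γhat i)^2 * ((fun n => Φ n i) ⬝ᵥ (Sig Φ σ2 γhat)⁻¹ *ᵥ y l)^2
              * ((γ i)⁻¹ - (γhat i)⁻¹)
          = (γhat i)^2 * ((γ i)⁻¹ - (γhat i)⁻¹)
            * ∑ l, ((fun n => Φ n i) ⬝ᵥ (Sig Φ σ2 γhat)⁻¹ *ᵥ y l)^2 := by
        rw [Finset.mul_sum]
        exact Finset.sum_congr rfl fun l _ => by ring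
      rw [this]
      ring
    -- combine the two bounds and do algebra
    have hEq : (∑ i, (γ i - γhat i) * T2 Φ σ2 γhat i)
          + ∑ i, (γhat i)^2 * T1 Φ σ2 y γhat i * ((γ i)⁻¹ - (γhat i)⁻¹)
        = ∑ i, (γ i * T2 Φ σ2 γhat i + (γhat i) ^ 2 * T1 Φ σ2 y γhat i / γ i)
          - ∑ i, γhat i * (T1 Φ σ2 y γhat i + T2 Φ σ2 γhat i) := by
      rw [← Finset.sum_add_distrib, ← Finset.sum_sub_distrib]
      refine Finset.sum_congr rfl fun i _ => ?_
      have h1 : γ i ≠ 0 := (hγ i).ne'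
      have h2 : γhat i ≠ 0 := (hγh i).ne'
      field_simp
      ring
    simp only [fSBL]
    linarith
  · intro γhat hγh
    have : ∑ i, (γhat i * T2 Φ σ2 γhat i + (γhat i) ^ 2 * T1 Φ σ2 y γhat i / γhat i)
        = ∑ i, γhat i * (T1 Φ σ2 y γhat i + T2 Φ σ2 γhat i) := by
      refine Finset.sum_congr rfl fun i _ => ?_
      have h2 : γhat i ≠ 0 := (hγh i).ne'
      field_simp
      ring
    rw [this]
    ring
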